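/- arXiv:1807.03158 — 3 statements merged into one kernel-verified Lean document; each statement's English description precedes it below -/
import Mathlib

section
/- For all nonnegative integers n, √((2n+1)(2n+4)) ≤ (2n + 5/2) − (9/8)/(2n + 5/2) − (81/128)/(2n + 5/2)³. -/
/-! The coefficients `9/8` and `81/128` are the first terms of the expansion
`√(x² − 9/4) = x − (9/8)/x − (81/128)/x³ − …`. Squaring the truncation cancels the
`1/x²` term exactly and leaves `x² − 9/4` plus positive terms, so the truncation
overestimates the root as soon as it is nonnegative, which holds for `x ≥ 3/2`.
Here `x = 2n + 5/2`, because `(2n+1)(2n+4) = (2n+5/2)² − 9/4`. -/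

namespace SqrtSeries

theorem sq_truncation_eq {x : ℝ} (hx : x ≠ 0) :
    (x - 9 / 8 / x - 81 / 128 / x ^ 3) ^ 2 =
      x ^ 2 - 9 / 4 + 729 / 512 / x ^ 4 + 6561 / 16384 / x ^ 6 := by
  field_simp
  ring

theorem truncation_nonneg {x : ℝ} (hx : 3 / 2 ≤ x) :
    0 ≤ x - 9 / 8 / x - 81 / 128 / x ^ 3 := by
  have hx0 : 0 < x := by linarith
  have hx2 : 9 / 4 ≤ x ^ 2 := by nlinarith
  have hnum : 0 ≤ x ^ 2 * (x ^ 2 - 9 / 8) - 81 / 128 := by nlinarith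
  have hform : x - 9 / 8 / x - 81 / 128 / x ^ 3 = (x ^ 2 * (x ^ 2 - 9 / 8) - 81 / 128) / x ^ 3 := by
    field_simp
  rw [hform]
  exact div_nonneg hnum (by positivity)

theorem sqrt_sq_sub_le_truncation {x : ℝ} (hx : 3 / 2 ≤ x) :
    Real.sqrt (x ^ 2 - 9 / 4) ≤ x - 9 / 8 / x - 81 / 128 / x ^ 3 := by
  have hx0 : x ≠ 0 := by positivity
  rw [Real.sqrt_le_left (truncation_nonneg hx), sq_truncation_eq hx0]
  have : 0 ≤ 729 / 512 / x ^ 4 + 6561 / 16384 / x ^ 6 := by positivity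
  linarith

end SqrtSeries

/-- The overestimation of the square root term in `K_{(3,0)}`:
`√((2n+1)(2n+4)) ≤ (2n+5/2) − (9/8)/(2n+5/2) − (81/128)/(2n+5/2)³`. -/
theorem stmt_8 (n : ℕ) :
    Real.sqrt ((2 * (n : ℝ) + 1) * (2 * (n : ℝ) + 4)) ≤
      (2 * (n : ℝ) + 5 / 2) - (9 / 8) / (2 * (n : ℝ) + 5 / 2)
        - (81 / 128) / (2 * (n : ℝ) + 5 / 2) ^ 3 := by
  have hprod : (2 * (n : ℝ) + 1) * (2 * (n : ℝ) + 4) = (2 * (n : ℝ) + 5 / 2) ^ 2 - 9 / 4 := by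
    ring
  rw [hprod]
  exact SqrtSeries.sqrt_sq_sub_le_truncation (by linarith [n.cast_nonneg (α := ℝ)])
end

section
/- Let a, b be reals with 0 ≤ a ≤ 2 and 0 ≤ b ≤ 1, and let A(p) = (1−p)+p(1−a), B(p) = (1−p)b for p ∈ [0,1]. Then 2√(A(p)² + B(p)²) > 2 if and only if p < 1 − (1/(a²+b²))·(a(a−1) + √(a(a − ab² + 2b²))), provided a² + b² > 0 and a > 0. -/
/-- Threshold for Bell violation of a locally noisy TMSV state when the mixing
probability `p` is known: with `A(p) = (1−p)+p(1−a)`, `B(p) = (1−p)b`,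
`2√(A² + B²) > 2` iff `p < 1 − (a(a−1) + √(a(a−ab²+2b²)))/(a²+b²)`. -/
theorem stmt_11 (a b p : ℝ) (ha0 : 0 ≤ a) (ha2 : a ≤ 2) (hb0 : 0 ≤ b) (hb1 : b ≤ 1)
    (hp0 : 0 ≤ p) (hp1 : p ≤ 1) (hab : 0 < a ^ 2 + b ^ 2) (hapos : 0 < a) :
    2 * Real.sqrt (((1 - p) + p * (1 - a)) ^ 2 + ((1 - p) * b) ^ 2) > 2 ↔
      p < 1 - (1 / (a ^ 2 + b ^ 2)) *
        (a * (a - 1) + Real.sqrt (a * (a - a * b ^ 2 + 2 * b ^ 2))) := by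
  set s := Real.sqrt (a * (a - a * b ^ 2 + 2 * b ^ 2)) with hs
  have hb2 : b ^ 2 ≤ 1 := by nlinarith
  have hD : 0 ≤ a * (a - a * b ^ 2 + 2 * b ^ 2) := by
    have h1 : (0:ℝ) ≤ a * (1 - b ^ 2) := mul_nonneg hapos.le (by linarith)
    nlinarith [sq_nonneg b]
  have hs0 : 0 ≤ s := Real.sqrt_nonneg _
  have hsq : s ^ 2 = a * (a - a * b ^ 2 + 2 * b ^ 2) := Real.sq_sqrt hD
  have hkey : a ^ 2 - a ≤ s := by
    have hd : 0 ≤ a * (2 - a) * (a ^ 2 + b ^ 2) :=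
      mul_nonneg (mul_nonneg hapos.le (by linarith)) hab.le
    nlinarith [sq_nonneg (s + a - a ^ 2), sq_nonneg (s - a ^ 2 + a), hsq, hs0]
  have h2 : (1 : ℝ) - (1 / (a ^ 2 + b ^ 2)) * (a * (a - 1) + s)
      = (a + b ^ 2 - s) / (a ^ 2 + b ^ 2) := by
    field_simp; ring
  have hXnn : (0:ℝ) ≤ ((1 - p) + p * (1 - a)) ^ 2 + ((1 - p) * b) ^ 2 := by positivity
  rw [h2, lt_div_iff₀ hab]
  constructor
  · intro h
    have h1 : 1 < Real.sqrt (((1 - p) + p * (1 - a)) ^ 2 + ((1 - p) * b) ^ 2) := by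
      linarith
    have hX : 1 < ((1 - p) + p * (1 - a)) ^ 2 + ((1 - p) * b) ^ 2 := by
      nlinarith [Real.sq_sqrt hXnn,
        Real.sqrt_nonneg (((1 - p) + p * (1 - a)) ^ 2 + ((1 - p) * b) ^ 2)]
    -- (a + b² - p S)² - s² = S (X - 1) > 0, and a + b² - p S ≥ -s
    have hu : -s ≤ a + b ^ 2 - p * (a ^ 2 + b ^ 2) := by
      nlinarith [mul_nonneg (sub_nonneg.2 hp1) hab.le]
    nlinarith [mul_pos hab (by linarith :
      (0:ℝ) < (((1 - p) + p * (1 - a)) ^ 2 + ((1 - p) * b) ^ 2) - 1), hu, hsq]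
  · intro h
    have husq : s < a + b ^ 2 - p * (a ^ 2 + b ^ 2) := by linarith
    have hX : 1 < ((1 - p) + p * (1 - a)) ^ 2 + ((1 - p) * b) ^ 2 := by
      nlinarith [mul_pos hab (show (0:ℝ) < (a + b ^ 2 - p * (a ^ 2 + b ^ 2)) - s by linarith),
        hsq, hs0, mul_pos (show (0:ℝ) < a + b ^ 2 - p * (a ^ 2 + b ^ 2) - s by linarith)
          (show (0:ℝ) < a + b ^ 2 - p * (a ^ 2 + b ^ 2) + s by linarith)]
    have h1 : 1 < Real.sqrt (((1 - p) + p * (1 - a)) ^ 2 + ((1 - p) * b) ^ 2) :=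
      (Real.lt_sqrt (by norm_num)).2 (by simpa using hX)
    linarith
end

section
/- Fix r > 0 and let b = tanh 2r. For p ∈ [0,1] and β₁, β₂ > 0, define χ(p) = 2√((1−p)²b² + ((1−p) + p·tanh(β₁/2)tanh(β₂/2))²). Then χ(p) > 2 for all p with p < 1 − (1/(a²+b²))(a(a−1) + √(a(a−ab²+2b²))), where a = 1 − tanh(β₁/2)tanh(β₂/2). In particular, in the limit β₁, β₂ → ∞ (a → 0), χ(p) > 2 for every p < 1. -/
lemma tanh_pos_aux {x : ℝ} (hx : 0 < x) : 0 < Real.tanh x := by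
  rw [Real.tanh_eq_sinh_div_cosh]
  exact div_pos (Real.sinh_pos_iff.mpr hx) (Real.cosh_pos x)

lemma tanh_lt_one_aux (x : ℝ) : Real.tanh x < 1 := by
  rw [Real.tanh_eq_sinh_div_cosh, div_lt_one (Real.cosh_pos x), ← sub_pos,
    Real.cosh_sub_sinh]
  exact Real.exp_pos _

lemma quad_aux (a b p : ℝ) (ha0 : 0 < a) (hb0 : 0 < b) (hb1 : b < 1) (hp0 : 0 ≤ p)
    (hlt : p < 1 - (1 / (a ^ 2 + b ^ 2)) *
      (a * (a - 1) + Real.sqrt (a * (a - a * b ^ 2 + 2 * b ^ 2)))) :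
    1 < (1 - p) ^ 2 * b ^ 2 + ((1 - p) + p * (1 - a)) ^ 2 := by
  have hs : 0 < a ^ 2 + b ^ 2 := by positivity
  have hb2 : 0 < 1 - b ^ 2 := by nlinarith
  have hD0 : 0 ≤ a * (a - a * b ^ 2 + 2 * b ^ 2) := by nlinarith [mul_pos ha0 hb2]
  have hsq : Real.sqrt (a * (a - a * b ^ 2 + 2 * b ^ 2)) ^ 2
      = a * (a - a * b ^ 2 + 2 * b ^ 2) := Real.sq_sqrt hD0
  have hsD : 0 ≤ Real.sqrt (a * (a - a * b ^ 2 + 2 * b ^ 2)) := Real.sqrt_nonneg _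
  have key : Real.sqrt (a * (a - a * b ^ 2 + 2 * b ^ 2))
      < (a + b ^ 2) - (a ^ 2 + b ^ 2) * p := by
    have h2 : (a ^ 2 + b ^ 2) * p < (a ^ 2 + b ^ 2) * (1 - (1 / (a ^ 2 + b ^ 2)) *
        (a * (a - 1) + Real.sqrt (a * (a - a * b ^ 2 + 2 * b ^ 2)))) :=
      (mul_lt_mul_iff_right₀ hs).mpr hlt
    have h3 : (a ^ 2 + b ^ 2) * (1 - (1 / (a ^ 2 + b ^ 2)) *
        (a * (a - 1) + Real.sqrt (a * (a - a * b ^ 2 + 2 * b ^ 2))))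
        = (a ^ 2 + b ^ 2) - (a * (a - 1) + Real.sqrt (a * (a - a * b ^ 2 + 2 * b ^ 2))) := by
      field_simp
    rw [h3] at h2
    nlinarith
  have hDsq : a * (a - a * b ^ 2 + 2 * b ^ 2) < ((a + b ^ 2) - (a ^ 2 + b ^ 2) * p) ^ 2 := by
    nlinarith [key, hsD, hsq]
  have hid : (a ^ 2 + b ^ 2) * ((1 - p) ^ 2 * b ^ 2 + ((1 - p) + p * (1 - a)) ^ 2 - 1)
      = ((a + b ^ 2) - (a ^ 2 + b ^ 2) * p) ^ 2 - a * (a - a * b ^ 2 + 2 * b ^ 2) := by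
    ring
  nlinarith [hDsq, hs, hid]

/-- Bell violation of the TMSV state mixed with local thermal noise (`p` known):
`χ(p) = 2√((1−p)²b² + ((1−p)+p tanh(β₁/2)tanh(β₂/2))²) > 2` whenever
`p < 1 − (a(a−1)+√(a(a−ab²+2b²)))/(a²+b²)` with `a = 1 − tanh(β₁/2)tanh(β₂/2)`;
and in the zero-temperature limit (`a = 0`) `χ(p) > 2` for every `p < 1`. -/
theorem stmt_14 (r : ℝ) (hr : 0 < r) (β₁ β₂ : ℝ) (h1 : 0 < β₁) (h2 : 0 < β₂) :
    (∀ p : ℝ, 0 ≤ p → p ≤ 1 →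
      p < 1 - (1 / ((1 - Real.tanh (β₁ / 2) * Real.tanh (β₂ / 2)) ^ 2 + Real.tanh (2 * r) ^ 2)) *
        ((1 - Real.tanh (β₁ / 2) * Real.tanh (β₂ / 2)) *
            ((1 - Real.tanh (β₁ / 2) * Real.tanh (β₂ / 2)) - 1) +
          Real.sqrt ((1 - Real.tanh (β₁ / 2) * Real.tanh (β₂ / 2)) *
            ((1 - Real.tanh (β₁ / 2) * Real.tanh (β₂ / 2)) -
              (1 - Real.tanh (β₁ / 2) * Real.tanh (β₂ / 2)) * Real.tanh (2 * r) ^ 2 +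
              2 * Real.tanh (2 * r) ^ 2))) →
      2 * Real.sqrt ((1 - p) ^ 2 * Real.tanh (2 * r) ^ 2 +
        ((1 - p) + p * Real.tanh (β₁ / 2) * Real.tanh (β₂ / 2)) ^ 2) > 2) ∧
    (∀ p : ℝ, 0 ≤ p → p < 1 →
      2 * Real.sqrt ((1 - p) ^ 2 * Real.tanh (2 * r) ^ 2 + ((1 - p) + p) ^ 2) > 2) := by
  have hx0 : 0 < Real.tanh (β₁ / 2) := tanh_pos_aux (by linarith)
  have hx1 : Real.tanh (β₁ / 2) < 1 := tanh_lt_one_aux _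
  have hy0 : 0 < Real.tanh (β₂ / 2) := tanh_pos_aux (by linarith)
  have hy1 : Real.tanh (β₂ / 2) < 1 := tanh_lt_one_aux _
  have hb0 : 0 < Real.tanh (2 * r) := tanh_pos_aux (by linarith)
  have hb1 : Real.tanh (2 * r) < 1 := tanh_lt_one_aux _
  have ht1 : Real.tanh (β₁ / 2) * Real.tanh (β₂ / 2) < 1 := by nlinarith
  constructor
  · intro p hp0 hp1 hlt
    have ha0 : 0 < 1 - Real.tanh (β₁ / 2) * Real.tanh (β₂ / 2) := by linarith
    have key := quad_aux (1 - Real.tanh (β₁ / 2) * Real.tanh (β₂ / 2)) (Real.tanh (2 * r)) p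
      ha0 hb0 hb1 hp0 hlt
    have hf : 1 < (1 - p) ^ 2 * Real.tanh (2 * r) ^ 2 +
        ((1 - p) + p * Real.tanh (β₁ / 2) * Real.tanh (β₂ / 2)) ^ 2 := by
      have heq : (1 - p) + p * Real.tanh (β₁ / 2) * Real.tanh (β₂ / 2)
          = (1 - p) + p * (1 - (1 - Real.tanh (β₁ / 2) * Real.tanh (β₂ / 2))) := by ring
      rw [heq]; exact key
    have h1lt : 1 < Real.sqrt ((1 - p) ^ 2 * Real.tanh (2 * r) ^ 2 +
        ((1 - p) + p * Real.tanh (β₁ / 2) * Real.tanh (β₂ / 2)) ^ 2) := by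
      rw [show (1:ℝ) = Real.sqrt 1 from Real.sqrt_one.symm]
      exact Real.sqrt_lt_sqrt (by norm_num) (by rwa [Real.sqrt_one])
    linarith
  · intro p hp0 hp1
    have hf : 1 < (1 - p) ^ 2 * Real.tanh (2 * r) ^ 2 + ((1 - p) + p) ^ 2 := by
      have : 0 < (1 - p) ^ 2 * Real.tanh (2 * r) ^ 2 :=
        mul_pos (pow_pos (by linarith) 2) (pow_pos hb0 2)
      nlinarith
    have h1lt : 1 < Real.sqrt ((1 - p) ^ 2 * Real.tanh (2 * r) ^ 2 + ((1 - p) + p) ^ 2) := by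
      rw [show (1:ℝ) = Real.sqrt 1 from Real.sqrt_one.symm]
      exact Real.sqrt_lt_sqrt (by norm_num) (by rwa [Real.sqrt_one])
    linarith
end
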